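/- In Thompson's group T, for all integers i ≥ 1 and j with 1 ≤ j ≤ i, one has x_{i-j} · c_i^j = c_{i-1}^j. -/
import Mathlib


/-- Relators of the standard infinite presentation of Thompson's group `T`,
on generators `Sum.inl i ↦ x_i` and `Sum.inr i ↦ c_i`. -/
def TRel : Set (FreeGroup (ℕ ⊕ ℕ)) :=
  { r | (∃ i j : ℕ, i < j ∧
        r = FreeGroup.of (Sum.inl j) * FreeGroup.of (Sum.inl i) *
            (FreeGroup.of (Sum.inl i) * FreeGroup.of (Sum.inl (j + 1)))⁻¹) ∨
    (∃ k n : ℕ, k < n ∧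
        r = FreeGroup.of (Sum.inl k) * FreeGroup.of (Sum.inr (n + 1)) *
            (FreeGroup.of (Sum.inr n) * FreeGroup.of (Sum.inl (k + 1)))⁻¹) ∨
    (∃ n : ℕ, r = FreeGroup.of (Sum.inr n) * FreeGroup.of (Sum.inl 0) *
            ((FreeGroup.of (Sum.inr (n + 1))) ^ 2)⁻¹) ∨
    (∃ n : ℕ, r = FreeGroup.of (Sum.inr n) *
            (FreeGroup.of (Sum.inl n) * FreeGroup.of (Sum.inr (n + 1)))⁻¹) ∨
    (∃ n : ℕ, r = (FreeGroup.of (Sum.inr n)) ^ (n + 2)) }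

/-- Thompson's group `T`. -/
abbrev ThompsonT : Type := PresentedGroup TRel

/-- The generator `x_i` of `T`. -/
def x (i : ℕ) : ThompsonT := PresentedGroup.of (Sum.inl i)

/-- The torsion generator `c_i` of `T`. -/
def c (i : ℕ) : ThompsonT := PresentedGroup.of (Sum.inr i)

lemma relator_one {r : FreeGroup (ℕ ⊕ ℕ)} (h : r ∈ TRel) :
    (QuotientGroup.mk r : ThompsonT) = 1 :=
  (QuotientGroup.eq_one_iff r).2 (Subgroup.subset_normalClosure h)

lemma rel4 (n : ℕ) : x n * c (n + 1) = c n := by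
  have h := relator_one (r := FreeGroup.of (Sum.inr n) *
      (FreeGroup.of (Sum.inl n) * FreeGroup.of (Sum.inr (n + 1)))⁻¹)
    (Or.inr (Or.inr (Or.inr (Or.inl ⟨n, rfl⟩))))
  have h' : c n * (x n * c (n + 1))⁻¹ = 1 := h
  rw [mul_inv_eq_one] at h'
  exact h'.symm

lemma rel2 (k n : ℕ) (hkn : k < n) : x k * c (n + 1) = c n * x (k + 1) := by
  have h := relator_one (r := FreeGroup.of (Sum.inl k) * FreeGroup.of (Sum.inr (n + 1)) *
      (FreeGroup.of (Sum.inr n) * FreeGroup.of (Sum.inl (k + 1)))⁻¹)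
    (Or.inr (Or.inl ⟨k, n, hkn, rfl⟩))
  have h' : x k * c (n + 1) * (c n * x (k + 1))⁻¹ = 1 := h
  rw [mul_inv_eq_one] at h'
  exact h'

/-- Reduction of type (2): for `1 ≤ j ≤ i`, `x_{i-j} * c_i^j = c_{i-1}^j`. -/
theorem reduction_two (i j : ℕ) (hi : 1 ≤ i) (hj : 1 ≤ j) (hji : j ≤ i) :
    x (i - j) * c i ^ j = c (i - 1) ^ j := by
  induction j, hj using Nat.le_induction with
  | base =>
    have h := rel4 (i - 1)
    rw [Nat.sub_add_cancel hi] at h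
    simpa using h
  | succ j hj ih =>
    have h2 := rel2 (i - (j + 1)) (i - 1) (by omega)
    have e1 : i - 1 + 1 = i := by omega
    have e2 : i - (j + 1) + 1 = i - j := by omega
    rw [e1, e2] at h2
    have ihj := ih (by omega)
    calc x (i - (j + 1)) * c i ^ (j + 1)
        = x (i - (j + 1)) * c i * c i ^ j := by rw [pow_succ']; group
      _ = c (i - 1) * (x (i - j) * c i ^ j) := by rw [h2]; group
      _ = c (i - 1) * c (i - 1) ^ j := by rw [ihj]
      _ = c (i - 1) ^ (j + 1) := by rw [pow_succ']
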